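/- Let U be a finitely presented group such that the abelianization of U is trivial and such that every finitely presented group embeds into U (i.e., for every finitely presented group P there is an injective group homomorphism P → U). Then there exists a group homomorphism σ : U → U that is injective but not surjective. -/

import Mathlib

/-- A group is finitely presented if it is isomorphic to a presented group on finitely
many generators with finitely many relators. -/
def IsFinitelyPresented (G : Type*) [Group G] : Prop :=
  ∃ (n : ℕ) (rels : Set (FreeGroup (Fin n))),
    rels.Finite ∧ Nonempty (G ≃* PresentedGroup rels)

/-!
Embed `U` into the free product `U ∗ ℤ`, which is again finitely presented, and embed that back
into `U`. If the composite `U → U ∗ ℤ → U` were onto, the second map would be an isomorphism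
`U ∗ ℤ ≃* U`; but `U ∗ ℤ` maps onto `ℤ`, while `U` has no nontrivial homomorphism to an abelian
group.
-/

theorem isFinitelyPresented_iff {G : Type*} [Group G] :
    IsFinitelyPresented G ↔ Group.IsFinitelyPresented G := by
  constructor
  · rintro ⟨n, rels, hfin, ⟨e⟩⟩
    have : Finite rels := hfin.to_subtype
    exact .equiv e.symm
  · intro _
    exact Group.IsFinitelyPresented.exists_mulEquiv_presentedGroup

theorem MonoidHom.eq_one_of_subsingleton_abelianization {G A : Type*} [Group G] [CommGroup A]
    (hG : Subsingleton (Abelianization G)) (φ : G →* A) : φ = 1 := by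
  ext g
  rw [← Abelianization.lift_apply_of, Subsingleton.elim (Abelianization.of g) 1, map_one]
  rfl

theorem MonoidHom.not_surjective_of_subsingleton_abelianization {G U A : Type*} [Group G]
    [Group U] [CommGroup A] (hU : Subsingleton (Abelianization U)) {f : G →* U}
    (hf : Function.Injective f) {φ : G →* A} (hφ : φ ≠ 1) : ¬ Function.Surjective f := by
  intro hsurj
  let e : G ≃* U := MulEquiv.ofBijective f ⟨hf, hsurj⟩
  apply hφ
  calc φ = (φ.comp e.symm.toMonoidHom).comp e.toMonoidHom := by ext; simp
    _ = 1 := by rw [(φ.comp _).eq_one_of_subsingleton_abelianization hU, one_comp]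

theorem Monoid.Coprod.lift_one_id_ne_one (M A : Type*) [Monoid M] [Monoid A] [Nontrivial A] :
    Monoid.Coprod.lift (1 : M →* A) (MonoidHom.id A) ≠ 1 := by
  obtain ⟨a, ha⟩ := exists_ne (1 : A)
  intro h
  exact ha (by simpa using DFunLike.congr_fun h (Monoid.Coprod.inr a))

/-- If `U` is a finitely presented group with trivial abelianization into which every
finitely presented group embeds, then `U` admits an injective non-surjective
endomorphism. -/
theorem exists_injective_not_surjective_endo (U : Type) [Group U]
    (hfp : IsFinitelyPresented U)
    (htriv : Subsingleton (Abelianization U))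
    (huniv : ∀ (P : Type) [Group P], IsFinitelyPresented P →
      ∃ f : P →* U, Function.Injective f) :
    ∃ σ : U →* U, Function.Injective σ ∧ ¬ Function.Surjective σ := by
  have : Group.IsFinitelyPresented U := isFinitelyPresented_iff.mp hfp
  obtain ⟨f, hf⟩ :=
    huniv (Monoid.Coprod U (Multiplicative ℤ)) (isFinitelyPresented_iff.mpr inferInstance)
  refine ⟨f.comp Monoid.Coprod.inl, hf.comp Monoid.Coprod.inl_injective, fun hsurj => ?_⟩
  have hf_surj : Function.Surjective f := Function.Surjective.of_comp (g := Monoid.Coprod.inl) hsurj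
  exact f.not_surjective_of_subsingleton_abelianization htriv hf
    (Monoid.Coprod.lift_one_id_ne_one U (Multiplicative ℤ)) hf_surj
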